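/- arXiv:1509.03618 — 2 statements merged into one kernel-verified Lean document; each statement's English description precedes it below -/
import Mathlib

section
/- For every ring R, every natural number n ≥ 3, and every nontrivial commutative ring C, there is no morphism of partial rings from the matrix ring Mₙ(R) = Matrix (Fin n) (Fin n) R to C. -/
/-!
Passing to the quotient by a maximal ideal, we may assume `C` is a field. Then a partial ring
morphism sends idempotents to `0` or `1`, is multiplicative on commuting idempotents and additive
on orthogonal ones. The diagonal matrix units sum to `1`, so some `E_aa` is sent to `1`, and the
corner embedding of `M₃(ℤ)` at three indices including `a` pulls `f` back to a partial ring
morphism `M₃(ℤ) → C`. None exists, by a Kochen–Specker argument: the 53 integer idempotents below,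
linked by commuting products and orthogonal sums, admit no `0`/`1` valuation with `1 ↦ 1`.
-/

def IsPartialRingHom {R C : Type*} [Ring R] [CommRing C] (f : R → C) : Prop :=
  f 0 = 0 ∧ f 1 = 1 ∧
    ∀ x y : R, x * y = y * x → f (x + y) = f x + f y ∧ f (x * y) = f x * f y

namespace IsPartialRingHom

section

variable {A B C D : Type*} [Ring A] [Ring B] [CommRing C] [CommRing D] {f : B → C}

protected theorem map_zero (hf : IsPartialRingHom f) : f 0 = 0 :=
  hf.1

protected theorem map_one (hf : IsPartialRingHom f) : f 1 = 1 :=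
  hf.2.1

theorem map_add_of_commute (hf : IsPartialRingHom f) {x y : B} (h : Commute x y) :
    f (x + y) = f x + f y :=
  (hf.2.2 x y h).1

theorem map_mul_of_commute (hf : IsPartialRingHom f) {x y : B} (h : Commute x y) :
    f (x * y) = f x * f y :=
  (hf.2.2 x y h).2

theorem ringHom_comp (hf : IsPartialRingHom f) (g : C →+* D) : IsPartialRingHom (g ∘ f) :=
  ⟨by simp [hf.map_zero], by simp [hf.map_one], fun x y h => by
    simp [hf.map_add_of_commute h, hf.map_mul_of_commute h]⟩

theorem comp_nonUnitalRingHom {F : Type*} [FunLike F A B] [NonUnitalRingHomClass F A B]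
    (hf : IsPartialRingHom f) (φ : F) {x : A} (hx : f (φ x) = 1) : IsPartialRingHom (f ∘ φ) := by
  refine ⟨by simp [hf.map_zero], ?_, fun y z (h : Commute y z) => ?_⟩
  · have h1 : f (φ 1) * f (φ x) = f (φ x) := by
      rw [← hf.map_mul_of_commute ((Commute.one_left x).map φ), ← map_mul, one_mul]
    simpa [hx] using h1
  · simp only [Function.comp_apply, map_add, map_mul]
    exact ⟨hf.map_add_of_commute (h.map φ), hf.map_mul_of_commute (h.map φ)⟩

theorem map_sum_of_commute (hf : IsPartialRingHom f) {ι : Type*} (s : Finset ι) (x : ι → B)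
    (h : ∀ i j, Commute (x i) (x j)) : f (∑ i ∈ s, x i) = ∑ i ∈ s, f (x i) := by
  classical
  induction s using Finset.induction_on with
  | empty => simp [hf.map_zero]
  | insert i s hi ih =>
    rw [Finset.sum_insert hi, Finset.sum_insert hi,
      hf.map_add_of_commute (Commute.sum_right _ _ _ fun j _ => h i j), ih]

theorem isIdempotentElem_map (hf : IsPartialRingHom f) {e : B} (he : IsIdempotentElem e) :
    IsIdempotentElem (f e) := by
  rw [IsIdempotentElem, ← hf.map_mul_of_commute (Commute.refl e), he.eq]

end

section IsDomain

variable {B K : Type*} [Ring B] [CommRing K] [IsDomain K] {f : B → K}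

theorem map_eq_zero_or_one (hf : IsPartialRingHom f) {e : B} (he : IsIdempotentElem e) :
    f e = 0 ∨ f e = 1 :=
  IsIdempotentElem.iff_eq_zero_or_one.1 (hf.isIdempotentElem_map he)

theorem map_mul_eq_one_iff (hf : IsPartialRingHom f) {e e' : B} (he : IsIdempotentElem e)
    (he' : IsIdempotentElem e') (h : Commute e e') :
    f (e * e') = 1 ↔ f e = 1 ∧ f e' = 1 := by
  rw [hf.map_mul_of_commute h]
  rcases hf.map_eq_zero_or_one he with h1 | h1 <;>
    rcases hf.map_eq_zero_or_one he' with h2 | h2 <;> simp [h1, h2]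

theorem map_add_eq_one_iff (hf : IsPartialRingHom f) {e e' : B} (he : IsIdempotentElem e)
    (he' : IsIdempotentElem e') (h : e * e' = 0) (h' : e' * e = 0) :
    (f (e + e') = 1 ↔ f e = 1 ∨ f e' = 1) ∧ ¬(f e = 1 ∧ f e' = 1) := by
  have hc : Commute e e' := h.trans h'.symm
  have h0 : f e * f e' = 0 := by rw [← hf.map_mul_of_commute hc, h, hf.map_zero]
  rw [hf.map_add_of_commute hc]
  rcases hf.map_eq_zero_or_one he with h1 | h1 <;>
    rcases hf.map_eq_zero_or_one he' with h2 | h2 <;> simp_all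

theorem exists_map_single_eq_one {n R : Type*} [Fintype n] [DecidableEq n] [Ring R]
    {f : Matrix n n R → K} (hf : IsPartialRingHom f) : ∃ i, f (Matrix.single i i 1) = 1 := by
  have hcomm : ∀ i j : n, Commute (Matrix.single i i (1 : R)) (Matrix.single j j 1) := by
    intro i j
    rcases eq_or_ne i j with rfl | hij
    · exact Commute.refl _
    · rw [Commute, SemiconjBy, Matrix.single_mul_single_of_ne _ _ _ _ hij,
        Matrix.single_mul_single_of_ne _ _ _ _ hij.symm]
  have hsum : ∑ i, f (Matrix.single i i 1) = 1 := by
    rw [← hf.map_sum_of_commute _ _ hcomm, Matrix.sum_single_one, hf.map_one]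
  obtain ⟨i, -, hi⟩ := Finset.exists_ne_zero_of_sum_ne_zero (hsum ▸ one_ne_zero)
  refine ⟨i, (hf.map_eq_zero_or_one ?_).resolve_left hi⟩
  rw [IsIdempotentElem, Matrix.single_mul_single_same, mul_one]

end IsDomain

end IsPartialRingHom

namespace Matrix

variable {m n α : Type*} [Fintype m] [Fintype n] [DecidableEq m] [DecidableEq n] [Semiring α]

def cornerEmbedding (e : m ↪ n) : Matrix m m α →ₙ+* Matrix n n α where
  toFun A := (1 : Matrix n n α).submatrix id e * A * (1 : Matrix n n α).submatrix e id
  map_mul' A B := by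
    have h : (1 : Matrix n n α).submatrix e id * (1 : Matrix n n α).submatrix id e = 1 := by
      rw [← submatrix_mul _ _ _ _ _ Function.bijective_id, one_mul, submatrix_one_embedding]
    simp only [Matrix.mul_assoc]
    rw [← Matrix.mul_assoc _ (submatrix 1 id e), h, Matrix.one_mul]
  map_zero' := by simp
  map_add' A B := by simp [Matrix.mul_add, Matrix.add_mul]

theorem cornerEmbedding_apply (e : m ↪ n) (A : Matrix m m α) :
    cornerEmbedding e A =
      (1 : Matrix n n α).submatrix id e * A * (1 : Matrix n n α).submatrix e id :=
  rfl

theorem cornerEmbedding_single (e : m ↪ n) (i j : m) (c : α) :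
    cornerEmbedding e (single i j c) = single (e i) (e j) c := by
  rw [cornerEmbedding_apply]
  ext k l
  simp only [mul_apply, single_apply, submatrix_apply, one_apply, id, ite_and]
  rw [Finset.sum_eq_single j (fun x _ hx => by simp [Ne.symm hx]) (by simp)]
  simp only [Finset.sum_ite_eq, Finset.mem_univ, if_true, mul_ite, ite_mul, mul_one, one_mul,
    mul_zero, zero_mul]
  grind

end Matrix

namespace KochenSpecker

def idempotent : Fin 53 → Matrix (Fin 3) (Fin 3) ℤ := ![
    !![1, 0, 0; 0, 1, 0; 0, 0, 1], !![-1, -1, -1; 1, 1, 1; 1, 1, 1],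
    !![0, -1, -1; 0, 0, 0; 0, 1, 1], !![0, -1, 0; 0, 1, 0; 0, -1, 0],
    !![0, -1, 0; 0, 1, 0; 0, 0, 0], !![0, -1, 0; 0, 1, 0; 0, 1, 0],
    !![0, -1, 1; 0, 1, -1; 0, 0, 0], !![0, 0, -1; 0, 0, -1; 0, 0, 1],
    !![0, 0, -1; 0, 0, 0; 0, 0, 1], !![0, 0, -1; 0, 0, 1; 0, 0, 1],
    !![0, 0, -1; 0, 1, 0; 0, 0, 1], !![0, 0, -1; 1, 1, 1; 0, 0, 1],
    !![0, 0, 0; -1, 0, -1; 1, 0, 1], !![0, 1, 0; 0, 1, 0; 0, -1, 0],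
    !![0, 1, 0; 0, 1, 0; 0, 0, 1], !![0, 1, 1; 0, 1, 1; 0, 0, 0],
    !![1, 0, 0; -1, 0, -1; 0, 0, 1], !![1, 0, 0; -1, 0, 0; -1, 0, 0],
    !![1, 0, 0; -1, 0, 0; 0, 0, 0], !![1, 0, 0; -1, 0, 0; 0, 0, 1],
    !![1, 0, 0; 0, 0, -1; 0, 0, 1], !![1, 0, 0; 0, 0, 0; -1, 0, 0],
    !![1, 0, 0; 0, 0, 0; 0, 0, 0], !![1, 0, 0; 0, 0, 0; 0, 0, 1],
    !![1, 0, 0; 0, 0, 0; 0, 1, 1], !![1, 0, 0; 0, 0, 0; 1, 0, 0],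
    !![1, 0, 0; 0, 0, 1; 0, 0, 1], !![1, 0, 0; 0, 1, -1; 0, 0, 0],
    !![1, 0, 0; 0, 1, 0; -1, -1, 0], !![1, 0, 0; 0, 1, 0; -1, 0, 0],
    !![1, 0, 0; 0, 1, 0; 0, -1, 0], !![1, 0, 0; 0, 1, 0; 0, 0, 0],
    !![1, 0, 0; 0, 1, 0; 0, 1, 0], !![1, 0, 0; 0, 1, 0; 1, -1, 0],
    !![1, 0, 0; 0, 1, 0; 1, 0, 0], !![1, 0, 0; 1, 0, 0; -1, 0, 0],
    !![1, 0, 0; 1, 0, 0; -1, 1, 1], !![1, 0, 0; 1, 0, 0; 0, 0, 0],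
    !![1, 0, 0; 1, 0, 0; 0, 0, 1], !![1, 0, 0; 1, 0, 1; 0, 0, 1],
    !![1, 0, 0; 1, 1, 1; -1, 0, 0], !![1, 0, 1; -1, 0, -1; 0, 0, 0],
    !![1, 0, 1; 0, 0, 0; 0, 0, 0], !![1, 0, 1; 0, 1, -1; 0, 0, 0],
    !![1, 0, 1; 1, 0, 1; 0, 0, 0], !![1, 1, -1; 0, 0, 0; 0, 0, 0],
    !![1, 1, 0; 0, 0, 0; -1, -1, 0], !![1, 1, 0; 0, 0, 0; 0, 0, 0],
    !![1, 1, 0; 0, 0, 0; 0, 0, 1], !![1, 1, 0; 0, 0, 0; 0, 1, 1],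
    !![1, 1, 0; 0, 0, 0; 1, 1, 0], !![1, 1, 1; 0, 0, 0; 0, 0, 0],
    !![1, 1, 1; 1, 1, 1; -1, -1, -1]]

def productTriples : List (Fin 53 × Fin 53 × Fin 53) := [
    (15, 36, 15), (14, 30, 13), (29, 38, 35), (26, 27, 22), (23, 31, 22), (19, 31, 18),
    (23, 29, 21), (24, 33, 25), (30, 36, 35), (24, 30, 22), (24, 28, 21), (19, 29, 17),
    (31, 38, 37), (18, 28, 18), (23, 34, 25), (27, 39, 37), (30, 49, 47), (17, 32, 17)]

def orthogonalSumTriples : List (Fin 53 × Fin 53 × Fin 53) := [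
    (5, 46, 29), (8, 42, 23), (3, 50, 34), (8, 51, 48), (12, 35, 20), (11, 41, 0),
    (8, 41, 16), (2, 52, 40), (2, 51, 24), (12, 21, 16), (6, 45, 27), (5, 47, 32),
    (8, 44, 39), (9, 43, 0), (9, 42, 26), (9, 41, 19), (12, 40, 0), (7, 44, 38),
    (1, 46, 11), (10, 42, 0), (3, 49, 0), (6, 47, 43), (2, 13, 10), (4, 47, 31),
    (7, 15, 14), (7, 42, 20), (4, 48, 0), (4, 46, 28)]

theorem isIdempotentElem_idempotent : ∀ i, IsIdempotentElem (idempotent i) := by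
  unfold IsIdempotentElem; decide

theorem idempotent_zero : idempotent 0 = 1 := by decide

theorem productTriples_spec : ∀ t ∈ productTriples,
    idempotent t.1 * idempotent t.2.1 = idempotent t.2.2 ∧
      idempotent t.2.1 * idempotent t.1 = idempotent t.2.2 := by
  simp only [productTriples, List.forall_mem_cons, List.not_mem_nil, IsEmpty.forall_iff,
    forall_const, and_true]
  and_intros <;> decide

theorem orthogonalSumTriples_spec : ∀ t ∈ orthogonalSumTriples,
    idempotent t.1 * idempotent t.2.1 = 0 ∧ idempotent t.2.1 * idempotent t.1 = 0 ∧
      idempotent t.1 + idempotent t.2.1 = idempotent t.2.2 := by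
  simp only [orthogonalSumTriples, List.forall_mem_cons, List.not_mem_nil, IsEmpty.forall_iff,
    forall_const, and_true]
  and_intros <;> decide

def IsColoring (x : Fin 53 → Prop) : Prop :=
  x 0 ∧ (∀ t ∈ productTriples, (x t.2.2 ↔ x t.1 ∧ x t.2.1)) ∧
    ∀ t ∈ orthogonalSumTriples, (x t.2.2 ↔ x t.1 ∨ x t.2.1) ∧ ¬(x t.1 ∧ x t.2.1)

theorem not_isColoring (x : Fin 53 → Prop) : ¬IsColoring x := by
  rintro ⟨h0, hprod, hsum⟩
  simp only [productTriples, orthogonalSumTriples, List.forall_mem_cons, List.not_mem_nil,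
    IsEmpty.forall_iff, forall_const, and_true] at hprod hsum
  grind

theorem isColoring_of_isPartialRingHom {K : Type*} [CommRing K] [IsDomain K]
    {v : Matrix (Fin 3) (Fin 3) ℤ → K} (hv : IsPartialRingHom v) :
    IsColoring fun i => v (idempotent i) = 1 := by
  refine ⟨by simpa [idempotent_zero] using hv.map_one, fun t ht => ?_, fun t ht => ?_⟩
  all_goals dsimp only
  · obtain ⟨hab, hba⟩ := productTriples_spec t ht
    rw [← hab]
    exact hv.map_mul_eq_one_iff (isIdempotentElem_idempotent _) (isIdempotentElem_idempotent _)
      (hab.trans hba.symm)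
  · obtain ⟨hab, hba, hsum⟩ := orthogonalSumTriples_spec t ht
    rw [← hsum]
    exact hv.map_add_eq_one_iff (isIdempotentElem_idempotent _) (isIdempotentElem_idempotent _)
      hab hba

end KochenSpecker

theorem Matrix.not_isPartialRingHom_fin_three_int {K : Type*} [CommRing K] [IsDomain K]
    (v : Matrix (Fin 3) (Fin 3) ℤ → K) : ¬IsPartialRingHom v := fun hv =>
  KochenSpecker.not_isColoring _ (KochenSpecker.isColoring_of_isPartialRingHom hv)

/-- For every ring `R`, every `n ≥ 3`, and every nontrivial commutative ring `C`, there is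
no morphism of partial rings from `Mₙ(R)` to `C`. -/
theorem no_partial_ring_hom_matrix_ring (R : Type*) [Ring R] (n : ℕ) (hn : 3 ≤ n)
    (C : Type*) [CommRing C] [Nontrivial C] :
    ¬ ∃ f : Matrix (Fin n) (Fin n) R → C, IsPartialRingHom f := by
  rintro ⟨f, hf⟩
  obtain ⟨I, hI⟩ := Ideal.exists_maximal C
  have hg := hf.ringHom_comp (Ideal.Quotient.mk I)
  obtain ⟨a, ha⟩ := hg.exists_map_single_eq_one
  let e : Fin 3 ↪ Fin n :=
    (Fin.castLEEmb hn).trans (Equiv.swap (Fin.castLE hn 0) a).toEmbedding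
  have hv := hg.comp_nonUnitalRingHom (Matrix.cornerEmbedding e) (x := Matrix.single 0 0 1)
    (by simpa [e, Matrix.cornerEmbedding_single] using ha)
  exact Matrix.not_isPartialRingHom_fin_three_int _
    (hv.comp_nonUnitalRingHom (Int.castRingHom R).mapMatrix (x := 1) (by simpa using hv.map_one))
end

section
/- For p = 2 and for p = 3, there exists a Kochen–Specker coloring of the symmetric idempotents of the matrix ring M₃(𝔽_p) over the field 𝔽_p = ZMod p, and the partial ring M₃(𝔽_p)_sym of symmetric 3×3 matrices over 𝔽_p has a prime partial ideal. -/
/-!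
Given a Kochen–Specker colouring `c` of a finite ring, fix `N ≠ 0` such that every `A ^ N` is
idempotent, and call a symmetric `A` false when the projection `A ^ N` is coloured false. On
commuting projections `c (P * Q) = c P && c Q`, which makes the false elements of a commutative
subring of symmetric matrices closed under multiplication by anything and prime. If `A ^ N` and
`B ^ N` are false, then `(A + B) ^ N` is orthogonal to the true projection
`(1 - A ^ N) * (1 - B ^ N)`, since `(A + B) * (1 - A ^ N) * (1 - B ^ N)` is nilpotent; so the false
elements are also closed under addition.

Over `𝔽₂` and `𝔽₃` the colouring is `P ↦ (∑ j, P 0 j = 1)`. The functional `P ↦ ∑ j, P 0 j` is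
additive and sends `1` to `1`, so this is a colouring as soon as the functional takes only the
values `0` and `1` on projections and never the value `1` on two orthogonal ones. Both are finite
checks, and over `𝔽₃` the second follows from the first because `P + Q` is again a projection and
`2 ∉ {0, 1}`.
-/

open Matrix

/-- A Kochen–Specker coloring of the symmetric idempotents of `M₃(R)`. -/
def IsSymKSColoring {R : Type*} [CommRing R]
    (c : {P : Matrix (Fin 3) (Fin 3) R // Pᵀ = P ∧ P * P = P} → Bool) : Prop :=
  ∀ (k : ℕ) (e : Fin k → {P : Matrix (Fin 3) (Fin 3) R // Pᵀ = P ∧ P * P = P}),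
    (∀ i j : Fin k, i ≠ j →
      (e i : Matrix (Fin 3) (Fin 3) R) * (e j : Matrix (Fin 3) (Fin 3) R) = 0) →
    ((∀ i j : Fin k, c (e i) = true → c (e j) = true → i = j) ∧
      ((∑ i, (e i : Matrix (Fin 3) (Fin 3) R)) = 1 → ∃! i : Fin k, c (e i) = true))

/-- A prime partial ideal of the partial ring `M₃(R)_sym` of symmetric matrices: a subset
of the set of symmetric matrices such that for every commutative subring `C` of `M₃(R)`
consisting of symmetric matrices, the corresponding subset of `C` is a prime ideal. -/
def IsSymPrimePartialIdeal {R : Type*} [CommRing R]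
    (p : Set (Matrix (Fin 3) (Fin 3) R)) : Prop :=
  (∀ A ∈ p, Aᵀ = A) ∧
  ∀ C : Subring (Matrix (Fin 3) (Fin 3) R), (∀ x y : C, x * y = y * x) →
    (∀ x : C, (x : Matrix (Fin 3) (Fin 3) R)ᵀ = (x : Matrix (Fin 3) (Fin 3) R)) →
    ∃ I : Ideal C, I.IsPrime ∧ ∀ x : C, x ∈ I ↔ (x : Matrix (Fin 3) (Fin 3) R) ∈ p

theorem exists_pow_isIdempotentElem_of_pow_eq {M : Type*} [Monoid M] {x : M} {a b : ℕ}
    (hab : a < b) (h : x ^ a = x ^ b) : ∃ n ≠ 0, IsIdempotentElem (x ^ n) := by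
  have hstep (m : ℕ) (ham : a ≤ m) : x ^ (m + (b - a)) = x ^ m := by
    rw [show m + (b - a) = b + (m - a) by omega, pow_add, ← h, ← pow_add, Nat.add_sub_cancel' ham]
  have hperiod (m k : ℕ) (ham : a ≤ m) : x ^ (m + k * (b - a)) = x ^ m := by
    induction k with
    | zero => simp
    | succ k ih => rw [add_one_mul, ← add_assoc, hstep _ (by omega), ih]
  refine ⟨(a + 1) * (b - a), Nat.mul_ne_zero (by omega) (by omega), ?_⟩
  rw [IsIdempotentElem, ← pow_add, hperiod _ (a + 1)
    (le_trans (Nat.le_succ a) (Nat.le_mul_of_pos_right _ (by omega)))]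

theorem exists_pow_isIdempotentElem (M : Type*) [Monoid M] [Finite M] :
    ∃ N ≠ 0, ∀ x : M, IsIdempotentElem (x ^ N) := by
  have hx (x : M) : ∃ n ≠ 0, IsIdempotentElem (x ^ n) := by
    obtain ⟨a, b, hne, h⟩ := Finite.exists_ne_map_eq_of_infinite (fun n : ℕ => x ^ n)
    rcases hne.lt_or_gt with hab | hab
    exacts [exists_pow_isIdempotentElem_of_pow_eq hab h,
      exists_pow_isIdempotentElem_of_pow_eq hab h.symm]
  choose n hn0 hn using hx
  cases nonempty_fintype M
  refine ⟨∏ x, n x, Finset.prod_ne_zero_iff.mpr fun x _ => hn0 x, fun x => ?_⟩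
  obtain ⟨k, hk⟩ := Finset.dvd_prod_of_mem n (Finset.mem_univ x)
  rw [hk, pow_mul]
  exact (hn x).pow k

theorem Commute.add_pow_mul_one_sub_pow_mul_one_sub_pow_eq_zero {M : Type*} [Ring M] {N : ℕ}
    (hN0 : N ≠ 0) (hN : ∀ x : M, IsIdempotentElem (x ^ N)) {a b : M} (hab : Commute a b) :
    (a + b) ^ N * ((1 - a ^ N) * (1 - b ^ N)) = 0 := by
  set e := (1 - a ^ N) * (1 - b ^ N)
  have hae : Commute a e :=
    ((Commute.one_right a).sub_right (.pow_right (.refl a) N)).mul_right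
      ((Commute.one_right a).sub_right (hab.pow_right N))
  have hbe : Commute b e :=
    ((Commute.one_right b).sub_right (hab.symm.pow_right N)).mul_right
      ((Commute.one_right b).sub_right (.pow_right (.refl b) N))
  have he : IsIdempotentElem e :=
    (hN a).one_sub.mul_of_commute ((Commute.one_right _).sub_right
      ((Commute.one_left _).sub_left (hab.pow_pow N N))) (hN b).one_sub
  have ha : IsNilpotent (a * e) := ⟨N, by
    rw [hae.mul_pow, he.pow_eq hN0, ← mul_assoc, (hN a).mul_one_sub_self, zero_mul]⟩
  have hb : IsNilpotent (b * e) := ⟨N, by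
    rw [hbe.mul_pow, he.pow_eq hN0,
      ((Commute.one_right _).sub_right (hab.pow_pow N N).symm).left_comm,
      (hN b).mul_one_sub_self, mul_zero]⟩
  have hsum : IsNilpotent ((a + b) * e) := by
    rw [add_mul]
    exact ((hab.mul_right hae).mul_left (hbe.symm.mul_right (.refl e))).isNilpotent_add ha hb
  calc (a + b) ^ N * e = ((a + b) * e) ^ N := by rw [(hae.add_left hbe).mul_pow, he.pow_eq hN0]
    _ = 0 := (hN _).eq_zero_of_isNilpotent (hsum.pow_of_pos hN0)

theorem Matrix.forall_symm_fin_three_iff {α : Type*} {p : Matrix (Fin 3) (Fin 3) α → Prop} :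
    (∀ A : Matrix (Fin 3) (Fin 3) α, Aᵀ = A → p A) ↔
      ∀ a b c d e f : α, p !![a, b, c; b, d, e; c, e, f] := by
  refine ⟨fun h a b c d e f => h _ ?_, fun h A hA => ?_⟩
  · ext i j; fin_cases i <;> fin_cases j <;> rfl
  · have hs (i j : Fin 3) : A j i = A i j := congrFun (congrFun hA i) j
    rw [eta_fin_three A, hs 1 0, hs 2 0, hs 2 1]
    exact h _ _ _ _ _ _

abbrev SymIdem (R : Type*) [CommRing R] :=
  {P : Matrix (Fin 3) (Fin 3) R // Pᵀ = P ∧ P * P = P}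

namespace SymIdem

variable {R : Type*} [CommRing R]

theorem mul_eq_zero_comm {P Q : SymIdem R} (h : P.1 * Q.1 = 0) : Q.1 * P.1 = 0 := by
  simpa [transpose_mul, P.2.1, Q.2.1] using congrArg transpose h

theorem isIdempotentElem (P : SymIdem R) : IsIdempotentElem P.1 := P.2.2

def zero : SymIdem R := ⟨0, transpose_zero, mul_zero 0⟩

def one : SymIdem R := ⟨1, transpose_one, mul_one 1⟩

def compl (P : SymIdem R) : SymIdem R :=
  ⟨1 - P.1, by rw [transpose_sub, transpose_one, P.2.1], IsIdempotentElem.one_sub P.2.2⟩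

def mul (P Q : SymIdem R) (h : Commute P.1 Q.1) : SymIdem R :=
  ⟨P.1 * Q.1, by rw [transpose_mul, P.2.1, Q.2.1, h.eq],
    IsIdempotentElem.mul_of_commute h P.2.2 Q.2.2⟩

def add (P Q : SymIdem R) (h : P.1 * Q.1 = 0) : SymIdem R :=
  ⟨P.1 + Q.1, by rw [transpose_add, P.2.1, Q.2.1],
    IsIdempotentElem.add P.2.2 Q.2.2 (by rw [h, mul_eq_zero_comm h, add_zero])⟩

def pow {N : ℕ} (hN : ∀ A : Matrix (Fin 3) (Fin 3) R, IsIdempotentElem (A ^ N))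
    {A : Matrix (Fin 3) (Fin 3) R} (hA : Aᵀ = A) : SymIdem R :=
  ⟨A ^ N, by rw [transpose_pow, hA], hN A⟩

end SymIdem

namespace IsSymKSColoring

variable {R : Type*} [CommRing R] {c : SymIdem R → Bool} {N : ℕ}

theorem eq_false_of_mul_eq_zero (hc : IsSymKSColoring c) {P Q : SymIdem R}
    (hPQ : P.1 * Q.1 = 0) (hP : c P = true) : c Q = false := by
  rw [← Bool.not_eq_true]
  intro hQ
  have horth : ∀ i j : Fin 2, i ≠ j → (![P, Q] i).1 * (![P, Q] j).1 = 0 := by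
    intro i j hij
    fin_cases i <;> fin_cases j <;> simp_all [SymIdem.mul_eq_zero_comm]
  exact absurd ((hc 2 ![P, Q] horth).1 0 1 hP hQ) (by decide)

theorem apply_zero (hc : IsSymKSColoring c) : c SymIdem.zero = false := by
  cases h : c SymIdem.zero
  · rfl
  · exact h ▸ hc.eq_false_of_mul_eq_zero (mul_zero 0) h

theorem apply_one (hc : IsSymKSColoring c) : c SymIdem.one = true := by
  obtain ⟨_, h, -⟩ := (hc 1 (fun _ => SymIdem.one)
    fun i j hij => absurd (Subsingleton.elim i j) hij).2 (by simp [SymIdem.one])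
  exact h

theorem exists_of_add_eq_one (hc : IsSymKSColoring c) {P Q : SymIdem R}
    (hPQ : P.1 * Q.1 = 0) (hsum : P.1 + Q.1 = 1) : c P = true ∨ c Q = true := by
  have horth : ∀ i j : Fin 2, i ≠ j → (![P, Q] i).1 * (![P, Q] j).1 = 0 := by
    intro i j hij
    fin_cases i <;> fin_cases j <;> simp_all [SymIdem.mul_eq_zero_comm]
  obtain ⟨i, hi, -⟩ := (hc 2 ![P, Q] horth).2 (by simpa using hsum)
  fin_cases i <;> simp_all

theorem exists_of_add_add_eq_one (hc : IsSymKSColoring c) {P Q S : SymIdem R}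
    (hPQ : P.1 * Q.1 = 0) (hPS : P.1 * S.1 = 0) (hQS : Q.1 * S.1 = 0)
    (hsum : P.1 + Q.1 + S.1 = 1) : c P = true ∨ c Q = true ∨ c S = true := by
  have horth : ∀ i j : Fin 3, i ≠ j → (![P, Q, S] i).1 * (![P, Q, S] j).1 = 0 := by
    intro i j hij
    fin_cases i <;> fin_cases j <;> simp_all [SymIdem.mul_eq_zero_comm]
  obtain ⟨i, hi, -⟩ := (hc 3 ![P, Q, S] horth).2 (by simpa [Fin.sum_univ_three] using hsum)
  fin_cases i <;> simp_all

theorem apply_compl (hc : IsSymKSColoring c) (P : SymIdem R) : c P.compl = !c P := by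
  cases hP : c P
  · simpa [hP] using hc.exists_of_add_eq_one (Q := P.compl) P.isIdempotentElem.mul_one_sub_self
      (add_sub_cancel _ _)
  · exact hc.eq_false_of_mul_eq_zero P.isIdempotentElem.mul_one_sub_self hP

theorem apply_mul (hc : IsSymKSColoring c) (P Q : SymIdem R) (h : Commute P.1 Q.1) :
    c (P.mul Q h) = (c P && c Q) := by
  cases hP : c P
  · refine hc.eq_false_of_mul_eq_zero (P := P.compl) ?_ (by rw [hc.apply_compl, hP]; rfl)
    simp only [SymIdem.compl, SymIdem.mul, ← mul_assoc, P.isIdempotentElem.one_sub_mul_self,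
      zero_mul]
  cases hQ : c Q
  · refine hc.eq_false_of_mul_eq_zero (P := Q.compl) (SymIdem.mul_eq_zero_comm ?_)
      (by rw [hc.apply_compl, hQ]; rfl)
    simp only [SymIdem.compl, SymIdem.mul, mul_assoc, Q.isIdempotentElem.mul_one_sub_self,
      mul_zero]
  -- `1 = P Q + P (1 - Q) + (1 - P)` is an orthogonal decomposition in which `1 - P` is false and
  -- `P (1 - Q)` is orthogonal to the true `Q`, so `P Q` is the true summand.
  let PQ' := P.mul Q.compl ((Commute.one_right _).sub_right h)
  obtain ⟨h₁, h₂, h₃, hPQ'Q⟩ : (P.mul Q h).1 * PQ'.1 = 0 ∧ (P.mul Q h).1 * P.compl.1 = 0 ∧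
      PQ'.1 * P.compl.1 = 0 ∧ PQ'.1 * Q.1 = 0 := by
    refine ⟨?_, ?_, ?_, ?_⟩ <;>
      simp only [PQ', SymIdem.mul, SymIdem.compl, mul_sub, sub_mul, mul_one, mul_assoc, h.symm.eq,
        h.symm.left_comm, P.isIdempotentElem.eq, Q.isIdempotentElem.eq,
        P.isIdempotentElem.mul_self_mul, sub_self]
  have hsum : (P.mul Q h).1 + PQ'.1 + P.compl.1 = 1 := by
    simp only [PQ', SymIdem.mul, SymIdem.compl]
    noncomm_ring
  rcases hc.exists_of_add_add_eq_one h₁ h₂ h₃ hsum with hPQ | hPQ' | hPc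
  · exact hPQ
  · simp [hc.eq_false_of_mul_eq_zero hPQ'Q hPQ'] at hQ
  · simp [hc.apply_compl, hP] at hPc

theorem apply_pow_zero (hc : IsSymKSColoring c) (hN0 : N ≠ 0)
    (hN : ∀ A : Matrix (Fin 3) (Fin 3) R, IsIdempotentElem (A ^ N))
    (h : (0 : Matrix (Fin 3) (Fin 3) R)ᵀ = 0) : c (SymIdem.pow hN h) = false := by
  rw [show SymIdem.pow hN h = SymIdem.zero from Subtype.ext (zero_pow hN0), hc.apply_zero]

theorem apply_pow_one (hc : IsSymKSColoring c)
    (hN : ∀ A : Matrix (Fin 3) (Fin 3) R, IsIdempotentElem (A ^ N))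
    (h : (1 : Matrix (Fin 3) (Fin 3) R)ᵀ = 1) : c (SymIdem.pow hN h) = true := by
  rw [show SymIdem.pow hN h = SymIdem.one from Subtype.ext (one_pow N), hc.apply_one]

theorem apply_pow_mul (hc : IsSymKSColoring c)
    (hN : ∀ A : Matrix (Fin 3) (Fin 3) R, IsIdempotentElem (A ^ N))
    {A B : Matrix (Fin 3) (Fin 3) R} (hA : Aᵀ = A) (hB : Bᵀ = B) (hAB : Commute A B)
    (hAB' : (A * B)ᵀ = A * B) :
    c (SymIdem.pow hN hAB') = (c (SymIdem.pow hN hA) && c (SymIdem.pow hN hB)) := by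
  rw [← hc.apply_mul _ _ (hAB.pow_pow N N)]
  exact congrArg c (Subtype.ext (hAB.mul_pow N))

theorem apply_pow_add (hc : IsSymKSColoring c) (hN0 : N ≠ 0)
    (hN : ∀ A : Matrix (Fin 3) (Fin 3) R, IsIdempotentElem (A ^ N))
    {A B : Matrix (Fin 3) (Fin 3) R} (hA : Aᵀ = A) (hB : Bᵀ = B) (hAB : Commute A B)
    (hAB' : (A + B)ᵀ = A + B) (ha : c (SymIdem.pow hN hA) = false)
    (hb : c (SymIdem.pow hN hB) = false) : c (SymIdem.pow hN hAB') = false := by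
  have hPQ : Commute (SymIdem.pow hN hA).compl.1 (SymIdem.pow hN hB).compl.1 :=
    (Commute.one_right _).sub_right ((Commute.one_left _).sub_left (hAB.pow_pow N N))
  have hH : c ((SymIdem.pow hN hA).compl.mul (SymIdem.pow hN hB).compl hPQ) = true := by
    rw [hc.apply_mul, hc.apply_compl, hc.apply_compl, ha, hb]; rfl
  have horth : (SymIdem.pow hN hAB').1 *
      ((SymIdem.pow hN hA).compl.mul (SymIdem.pow hN hB).compl hPQ).1 = 0 :=
    hAB.add_pow_mul_one_sub_pow_mul_one_sub_pow_eq_zero hN0 hN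
  exact hc.eq_false_of_mul_eq_zero (SymIdem.mul_eq_zero_comm horth) hH

theorem exists_isPrime (hc : IsSymKSColoring c) (hN0 : N ≠ 0)
    (hN : ∀ A : Matrix (Fin 3) (Fin 3) R, IsIdempotentElem (A ^ N))
    (C : Subring (Matrix (Fin 3) (Fin 3) R)) (hC : ∀ x y : C, x * y = y * x)
    (hsym : ∀ x : C, (x : Matrix (Fin 3) (Fin 3) R)ᵀ = x) :
    ∃ I : Ideal C, I.IsPrime ∧ ∀ x : C, x ∈ I ↔ c (SymIdem.pow hN (hsym x)) = false := by
  have hcomm (x y : C) : Commute (x : Matrix (Fin 3) (Fin 3) R) y := congrArg Subtype.val (hC x y)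
  have hmul (x y : C) := hc.apply_pow_mul hN (hsym x) (hsym y) (hcomm x y) (hsym (x * y))
  refine ⟨{ carrier := {x | c (SymIdem.pow hN (hsym x)) = false}
            add_mem' := fun {x y} hx hy =>
              hc.apply_pow_add hN0 hN (hsym x) (hsym y) (hcomm x y) (hsym (x + y)) hx hy
            zero_mem' := hc.apply_pow_zero hN0 hN (hsym 0)
            smul_mem' := fun r x hx => (hmul r x).trans (Bool.and_eq_false_iff.mpr (.inr hx)) },
    ⟨?_, fun {x y} hxy => Bool.and_eq_false_iff.mp ((hmul x y).symm.trans hxy)⟩, fun _ => Iff.rfl⟩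
  rw [Ideal.ne_top_iff_one]
  simp [hc.apply_pow_one hN (hsym 1)]

theorem exists_isSymPrimePartialIdeal [Finite R] (hc : IsSymKSColoring c) :
    ∃ q : Set (Matrix (Fin 3) (Fin 3) R), IsSymPrimePartialIdeal q := by
  obtain ⟨N, hN0, hN⟩ := exists_pow_isIdempotentElem (Matrix (Fin 3) (Fin 3) R)
  refine ⟨{A | ∃ hA : Aᵀ = A, c (SymIdem.pow hN hA) = false}, fun A hA => hA.1,
    fun C hC hsym => ?_⟩
  obtain ⟨I, hI, hmem⟩ := hc.exists_isPrime hN0 hN C hC hsym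
  exact ⟨I, hI, fun x => (hmem x).trans ⟨fun h => ⟨hsym x, h⟩, fun ⟨_, h⟩ => h⟩⟩

end IsSymKSColoring

section Colourings

variable {R : Type*} [CommRing R]

theorem isSymKSColoring_of_addMonoidHom [DecidableEq R] [Nontrivial R]
    (f : Matrix (Fin 3) (Fin 3) R →+ R) (h1 : f 1 = 1)
    (h01 : ∀ P : SymIdem R, f P.1 = 0 ∨ f P.1 = 1)
    (horth : ∀ P Q : SymIdem R, P.1 * Q.1 = 0 → f P.1 = 1 → f Q.1 ≠ 1) :
    IsSymKSColoring fun P => decide (f P.1 = 1) := by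
  intro k e he
  have hmost (i j : Fin k) (hi : decide (f (e i).1 = 1) = true)
      (hj : decide (f (e j).1 = 1) = true) : i = j := by
    by_contra hij
    exact horth _ _ (he i j hij) (of_decide_eq_true hi) (of_decide_eq_true hj)
  refine ⟨hmost, fun hsum => ?_⟩
  obtain ⟨i, hi⟩ : ∃ i, f (e i).1 = 1 := by
    by_contra! h
    have : ∑ i, f (e i).1 = 0 := Finset.sum_eq_zero fun i _ => (h01 (e i)).resolve_right (h i)
    rw [← map_sum, hsum, h1] at this
    exact one_ne_zero this
  exact ⟨i, decide_eq_true hi, fun j hj => hmost j i hj (decide_eq_true hi)⟩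

theorem isSymKSColoring_of_addMonoidHom_of_two_ne_zero [DecidableEq R]
    (f : Matrix (Fin 3) (Fin 3) R →+ R) (h1 : f 1 = 1) (h2 : (2 : R) ≠ 0)
    (h01 : ∀ P : SymIdem R, f P.1 = 0 ∨ f P.1 = 1) :
    IsSymKSColoring fun P => decide (f P.1 = 1) := by
  have : Nontrivial R := nontrivial_of_ne 2 0 h2
  refine isSymKSColoring_of_addMonoidHom f h1 h01 fun P Q hPQ hP hQ => ?_
  have h := h01 (P.add Q hPQ)
  simp only [SymIdem.add, map_add, hP, hQ, one_add_one_eq_two, h2, false_or] at h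
  exact one_ne_zero (add_eq_left.mp (one_add_one_eq_two.trans h))

def firstRowSum : Matrix (Fin 3) (Fin 3) R →+ R where
  toFun A := ∑ j, A 0 j
  map_zero' := by simp
  map_add' A B := by simp [Finset.sum_add_distrib]

theorem firstRowSum_eq_zero_or_eq_one_zmod_three (P : SymIdem (ZMod 3)) :
    firstRowSum P.1 = 0 ∨ firstRowSum P.1 = 1 := by
  have key : ∀ A : Matrix (Fin 3) (Fin 3) (ZMod 3), Aᵀ = A → A * A = A →
      firstRowSum A = 0 ∨ firstRowSum A = 1 := by
    rw [forall_symm_fin_three_iff]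
    decide
  exact key P.1 P.2.1 P.2.2

theorem firstRowSum_ne_one_of_mul_eq_zero_zmod_two (P Q : SymIdem (ZMod 2))
    (hPQ : P.1 * Q.1 = 0) (hP : firstRowSum P.1 = 1) : firstRowSum Q.1 ≠ 1 := by
  have key : ∀ A : Matrix (Fin 3) (Fin 3) (ZMod 2), Aᵀ = A → A * A = A → firstRowSum A = 1 →
      ∀ B : Matrix (Fin 3) (Fin 3) (ZMod 2), Bᵀ = B → B * B = B → A * B = 0 →
        firstRowSum B ≠ 1 := by
    simp only [forall_symm_fin_three_iff]
    decide
  exact key P.1 P.2.1 P.2.2 hP Q.1 Q.2.1 Q.2.2 hPQ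

theorem isSymKSColoring_zmod_two :
    IsSymKSColoring fun P : SymIdem (ZMod 2) => decide (firstRowSum P.1 = 1) :=
  isSymKSColoring_of_addMonoidHom firstRowSum (by decide)
    (fun P => by generalize firstRowSum P.1 = x; revert x; decide)
    firstRowSum_ne_one_of_mul_eq_zero_zmod_two

theorem isSymKSColoring_zmod_three :
    IsSymKSColoring fun P : SymIdem (ZMod 3) => decide (firstRowSum P.1 = 1) :=
  isSymKSColoring_of_addMonoidHom_of_two_ne_zero firstRowSum (by decide) (by decide)
    firstRowSum_eq_zero_or_eq_one_zmod_three

end Colourings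

/-- For `p = 2` and `p = 3`, there exists a Kochen–Specker coloring of the symmetric
idempotents of `M₃(𝔽_p)`, and the partial ring `M₃(𝔽_p)_sym` has a prime partial ideal. -/
theorem sym_KS_coloring_and_prime_partial_ideal_M3_F2_F3 (p : ℕ) (hp : p = 2 ∨ p = 3) :
    (∃ c : {P : Matrix (Fin 3) (Fin 3) (ZMod p) // Pᵀ = P ∧ P * P = P} → Bool,
        IsSymKSColoring c) ∧
    (∃ q : Set (Matrix (Fin 3) (Fin 3) (ZMod p)), IsSymPrimePartialIdeal q) := by
  obtain ⟨_, c, hc⟩ : NeZero p ∧ ∃ c : SymIdem (ZMod p) → Bool, IsSymKSColoring c := by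
    rcases hp with rfl | rfl
    exacts [⟨inferInstance, _, isSymKSColoring_zmod_two⟩,
      ⟨inferInstance, _, isSymKSColoring_zmod_three⟩]
  exact ⟨⟨c, hc⟩, hc.exists_isSymPrimePartialIdeal⟩
end
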